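/- Let R be a polynomial ring over a field, U ⊆ R an ideal, and ≺ a term order such that in_≺(U) is squarefree and in_≺(U)^(ℓ) = in_≺(U)^ℓ for all ℓ. Then in_≺(U^ℓ) = in_≺(U)^ℓ for all ℓ ≥ 1, i.e., the initial ideal of the Rees algebra of U equals the Rees algebra of the initial ideal. -/

import Mathlib

open MvPolynomial

variable {K : Type*} [Field K]

/-- The exponent of the initial (leading) term of a polynomial `f` with respect to a
monomial order `mo`: the largest exponent in the support of `f`. -/
noncomputable def leadExp {σ : Type*} (mo : MonomialOrder σ) (f : MvPolynomial σ K) :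
    σ →₀ ℕ :=
  mo.toSyn.symm (f.support.sup ⇑mo.toSyn)

/-- The initial ideal `in_mo(U)`: the ideal generated by the initial monomials of the
nonzero elements of `U`. -/
noncomputable def initialIdeal {σ : Type*} (mo : MonomialOrder σ)
    (U : Ideal (MvPolynomial σ K)) : Ideal (MvPolynomial σ K) :=
  Ideal.span { g | ∃ f ∈ U, f ≠ 0 ∧ g = (monomial (leadExp mo f) (1 : K)) }

/-- `W` is a squarefree monomial ideal: it is generated by monomials with squarefree
exponents. -/
def IsSquarefreeMonomialIdeal {σ : Type*} (W : Ideal (MvPolynomial σ K)) : Prop :=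
  ∃ S : Set (σ →₀ ℕ), (∀ d ∈ S, ∀ i, d i ≤ 1) ∧
    W = Ideal.span ((fun d => (monomial d (1 : K) : MvPolynomial σ K)) '' S)

/-- The symbolic power `I^{(n)} = ⋂_{p ∈ Min(I)} (pⁿ R_p ∩ R)`. -/
noncomputable def symbolicPower {R : Type*} [CommRing R] (I : Ideal R) (n : ℕ) : Ideal R :=
  ⨅ p : {q : Ideal R // q ∈ I.minimalPrimes},
    letI : p.1.IsPrime := p.2.1.1
    ((p.1 ^ n).map (algebraMap R (Localization.AtPrime p.1))).comap
      (algebraMap R (Localization.AtPrime p.1))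

set_option maxHeartbeats 1000000
set_option synthInstance.maxHeartbeats 400000
set_option linter.unusedSectionVars false
set_option linter.unusedVariables false

namespace StmtAux

variable {σ : Type*} [DecidableEq σ] (mo : MonomialOrder σ)

lemma toSyn_leadExp (f : MvPolynomial σ K) :
    mo.toSyn (leadExp mo f) = f.support.sup ⇑mo.toSyn := by
  simp [leadExp]

lemma le_toSyn_leadExp {f : MvPolynomial σ K} {b} (hb : b ∈ f.support) :
    mo.toSyn b ≤ mo.toSyn (leadExp mo f) := by
  rw [toSyn_leadExp]; exact Finset.le_sup hb

lemma leadExp_mem_support {f : MvPolynomial σ K} (hf : f ≠ 0) :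
    leadExp mo f ∈ f.support := by
  obtain ⟨b, hb, he⟩ := Finset.exists_mem_eq_sup f.support
    (MvPolynomial.support_nonempty.2 hf) ⇑mo.toSyn
  have : leadExp mo f = b := by rw [leadExp, he, AddEquiv.symm_apply_apply]
  rw [this]; exact hb

lemma coeff_leadExp_ne_zero {f : MvPolynomial σ K} (hf : f ≠ 0) :
    coeff (leadExp mo f) f ≠ 0 :=
  MvPolynomial.mem_support_iff.1 (leadExp_mem_support mo hf)

lemma leadExp_eq {f : MvPolynomial σ K} {a : σ →₀ ℕ} (hmem : a ∈ f.support)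
    (hmax : ∀ b ∈ f.support, mo.toSyn b ≤ mo.toSyn a) : leadExp mo f = a := by
  have h : f.support.sup ⇑mo.toSyn = mo.toSyn a :=
    le_antisymm (Finset.sup_le hmax) (Finset.le_sup hmem)
  rw [leadExp, h, AddEquiv.symm_apply_apply]

lemma coeff_add_leadExp {f g : MvPolynomial σ K} (hf : f ≠ 0) (hg : g ≠ 0) :
    coeff (leadExp mo f + leadExp mo g) (f * g)
      = coeff (leadExp mo f) f * coeff (leadExp mo g) g := by
  rw [MvPolynomial.coeff_mul]
  have hmem : (leadExp mo f, leadExp mo g) ∈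
      Finset.HasAntidiagonal.antidiagonal (leadExp mo f + leadExp mo g) := Finset.HasAntidiagonal.mem_antidiagonal.2 rfl
  refine Finset.sum_eq_single_of_mem _ hmem ?_
  rintro ⟨p1, p2⟩ hp hne
  rw [Finset.HasAntidiagonal.mem_antidiagonal] at hp
  by_cases h1 : coeff p1 f = 0
  · simp [h1]
  by_cases h2 : coeff p2 g = 0
  · simp [h2]
  exfalso
  have hm1 : mo.toSyn p1 ≤ mo.toSyn (leadExp mo f) :=
    le_toSyn_leadExp mo (MvPolynomial.mem_support_iff.2 h1)
  have hm2 : mo.toSyn p2 ≤ mo.toSyn (leadExp mo g) :=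
    le_toSyn_leadExp mo (MvPolynomial.mem_support_iff.2 h2)
  have hsum : mo.toSyn p1 + mo.toSyn p2
      = mo.toSyn (leadExp mo f) + mo.toSyn (leadExp mo g) := by
    rw [← map_add, ← map_add, hp]
  have e1 : mo.toSyn p1 = mo.toSyn (leadExp mo f) := by
    by_contra hne1
    have hlt : mo.toSyn p1 + mo.toSyn p2
        < mo.toSyn (leadExp mo f) + mo.toSyn (leadExp mo g) :=
      add_lt_add_of_lt_of_le (lt_of_le_of_ne hm1 hne1) hm2
    exact absurd hsum (ne_of_lt hlt)
  have ep1 : p1 = leadExp mo f := mo.toSyn.injective e1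
  have ep2 : p2 = leadExp mo g := by
    have h2' := hp
    rw [ep1] at h2'
    exact add_left_cancel h2'
  exact hne (by rw [ep1, ep2])


lemma leadExp_mul {f g : MvPolynomial σ K} (hf : f ≠ 0) (hg : g ≠ 0) :
    leadExp mo (f * g) = leadExp mo f + leadExp mo g := by
  refine leadExp_eq mo ?_ ?_
  · rw [MvPolynomial.mem_support_iff, coeff_add_leadExp mo hf hg]
    exact mul_ne_zero (coeff_leadExp_ne_zero mo hf) (coeff_leadExp_ne_zero mo hg)
  · intro b hb
    have hcb : coeff b (f * g) ≠ 0 := MvPolynomial.mem_support_iff.1 hb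
    rw [MvPolynomial.coeff_mul] at hcb
    obtain ⟨p, hp, hpne⟩ := Finset.exists_ne_zero_of_sum_ne_zero hcb
    rw [Finset.HasAntidiagonal.mem_antidiagonal] at hp
    have h1 : coeff p.1 f ≠ 0 := fun h => hpne (by simp [h])
    have h2 : coeff p.2 g ≠ 0 := fun h => hpne (by simp [h])
    calc mo.toSyn b = mo.toSyn p.1 + mo.toSyn p.2 := by rw [← map_add, hp]
    _ ≤ _ := by
        rw [map_add]
        exact add_le_add (le_toSyn_leadExp mo (MvPolynomial.mem_support_iff.2 h1))
          (le_toSyn_leadExp mo (MvPolynomial.mem_support_iff.2 h2))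

end StmtAux

namespace StmtAux

variable {σ : Type*} [DecidableEq σ] (mo : MonomialOrder σ)

/-- The "Taylor expansion" homomorphism: `x i ↦ C (x i) + y i`. -/
noncomputable def tay : MvPolynomial σ K →+* MvPolynomial σ (MvPolynomial σ K) :=
  MvPolynomial.eval₂Hom (MvPolynomial.C.comp MvPolynomial.C) (fun i => C (X i) + X i)

/-- Divided-power (Hasse) derivative of multi-order `α`. -/
noncomputable def hD (α : σ →₀ ℕ) (f : MvPolynomial σ K) : MvPolynomial σ K :=
  coeff α (tay f)

lemma hD_add (α : σ →₀ ℕ) (f g : MvPolynomial σ K) :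
    hD α (f + g) = hD α f + hD α g := by
  unfold hD; rw [map_add, coeff_add]

lemma hD_leibniz (α : σ →₀ ℕ) (f g : MvPolynomial σ K) :
    hD α (f * g) = ∑ p ∈ Finset.HasAntidiagonal.antidiagonal α, hD p.1 f * hD p.2 g := by
  unfold hD; rw [map_mul, MvPolynomial.coeff_mul]

lemma tay_C (c : K) : tay (C c : MvPolynomial σ K) = C (C c) := by
  unfold tay
  simp

lemma tay_X (i : σ) : tay (X i : MvPolynomial σ K) = C (X i) + X i := by
  unfold tay
  simp

lemma hD_zero (f : MvPolynomial σ K) : hD 0 f = f := by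
  have h : ((MvPolynomial.constantCoeff).comp (tay : MvPolynomial σ K →+* _)
      : MvPolynomial σ K →+* MvPolynomial σ K)
      = RingHom.id (MvPolynomial σ K) := by
    apply MvPolynomial.ringHom_ext
    · intro r
      rw [RingHom.comp_apply, RingHom.id_apply, tay_C, MvPolynomial.constantCoeff_C]
    · intro i
      rw [RingHom.comp_apply, RingHom.id_apply, tay_X]
      simp
  have h2 : MvPolynomial.constantCoeff (tay f) = f := by
    have h3 := congrArg (fun ψ => ψ f) h
    simpa using h3
  exact h2

def binomN (b α : σ →₀ ℕ) : ℕ := ∏ j ∈ α.support, Nat.choose (b j) (α j)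

lemma binomN_eq_prod {b α : σ →₀ ℕ} {s : Finset σ} (h : α.support ⊆ s) :
    binomN b α = ∏ j ∈ s, Nat.choose (b j) (α j) := by
  unfold binomN
  refine Finset.prod_subset h ?_
  intro j _ hj
  rw [Finsupp.notMem_support_iff.1 hj, Nat.choose_zero_right]

lemma binomN_zero_right (b : σ →₀ ℕ) : binomN b 0 = 1 := by
  simp [binomN]

lemma binomN_zero_left {α : σ →₀ ℕ} (hα : α ≠ 0) : binomN 0 α = 0 := by
  obtain ⟨i, hi⟩ : ∃ i, i ∈ α.support := by
    by_contra h
    push_neg at h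
    exact hα (Finsupp.support_eq_empty.1 (Finset.eq_empty_of_forall_notMem h) ▸ rfl)
  refine Finset.prod_eq_zero hi ?_
  have := Finsupp.mem_support_iff.1 hi
  simp [Nat.choose_eq_zero_of_lt (Nat.pos_of_ne_zero this)]

lemma binomN_self (a : σ →₀ ℕ) : binomN a a = 1 := by
  unfold binomN
  refine Finset.prod_eq_one fun j _ => Nat.choose_self _

lemma binomN_ne_zero_le {b α : σ →₀ ℕ} (h : binomN b α ≠ 0) : α ≤ b := by
  intro j
  by_contra hj
  push_neg at hj
  have hmem : j ∈ α.support := Finsupp.mem_support_iff.2 (by omega)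
  exact h (Finset.prod_eq_zero hmem (Nat.choose_eq_zero_of_lt hj))

lemma binomN_pascal {b' α : σ →₀ ℕ} {i : σ} (hi : α i ≠ 0) :
    binomN (b' + Finsupp.single i 1) α = binomN b' α + binomN b' (α - Finsupp.single i 1) := by
  have hims : i ∈ α.support := Finsupp.mem_support_iff.2 hi
  have hsub : (α - Finsupp.single i 1).support ⊆ α.support := Finsupp.support_tsub
  rw [binomN_eq_prod (le_refl α.support), binomN_eq_prod (le_refl α.support),
    binomN_eq_prod hsub]
  rw [← Finset.mul_prod_erase _ _ hims, ← Finset.mul_prod_erase _ _ hims,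
    ← Finset.mul_prod_erase _ _ hims]
  have he1 : ∀ j ∈ α.support.erase i,
      Nat.choose (((b' + Finsupp.single i 1) : σ →₀ ℕ) j) (α j) = Nat.choose (b' j) (α j) := by
    intro j hj
    have hji : j ≠ i := (Finset.mem_erase.1 hj).1
    rw [Finsupp.add_apply, Finsupp.single_apply, if_neg (Ne.symm hji), add_zero]
  have he2 : ∀ j ∈ α.support.erase i,
      Nat.choose (b' j) (((α - Finsupp.single i 1) : σ →₀ ℕ) j) = Nat.choose (b' j) (α j) := by
    intro j hj
    have hji : j ≠ i := (Finset.mem_erase.1 hj).1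
    rw [Finsupp.tsub_apply, Finsupp.single_apply, if_neg (Ne.symm hji), Nat.sub_zero]
  rw [Finset.prod_congr rfl he1, Finset.prod_congr rfl he2, ← add_mul]
  congr 1
  have hbi : ((b' + Finsupp.single i 1) : σ →₀ ℕ) i = b' i + 1 := by
    rw [Finsupp.add_apply, Finsupp.single_apply, if_pos rfl]
  have hai : ((α - Finsupp.single i 1) : σ →₀ ℕ) i = α i - 1 := by
    rw [Finsupp.tsub_apply, Finsupp.single_apply, if_pos rfl]
  rw [hbi, hai]
  obtain ⟨k, hk⟩ : ∃ k, α i = k + 1 := ⟨α i - 1, by omega⟩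
  rw [hk]
  simp [Nat.choose_succ_succ]
  omega

end StmtAux
section
open MvPolynomial
namespace StmtAux
variable {K : Type*} [Field K] {σ : Type*} [DecidableEq σ]

lemma sum_antidiagonal_eq (α γ : σ →₀ ℕ) (G : (σ →₀ ℕ) → MvPolynomial σ K) :
    ∑ p ∈ Finset.HasAntidiagonal.antidiagonal α, (if p.2 = γ then G p.1 else 0)
      = if γ ≤ α then G (α - γ) else 0 := by
  by_cases h : γ ≤ α
  · rw [if_pos h]
    have hmem : ((α - γ : σ →₀ ℕ), γ) ∈ Finset.HasAntidiagonal.antidiagonal α :=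
      Finset.HasAntidiagonal.mem_antidiagonal.2 (tsub_add_cancel_of_le h)
    rw [Finset.sum_eq_single_of_mem _ hmem]
    · rw [if_pos rfl]
    · rintro ⟨p1, p2⟩ hp hne
      rw [Finset.HasAntidiagonal.mem_antidiagonal] at hp
      by_cases h2 : p2 = γ
      · exfalso
        apply hne
        subst h2
        have : p1 = α - p2 := by
          have := tsub_add_cancel_of_le h
          exact add_right_cancel (hp.trans this.symm)
        rw [this]
      · rw [if_neg h2]
  · rw [if_neg h]
    refine Finset.sum_eq_zero ?_
    rintro ⟨p1, p2⟩ hp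
    rw [Finset.HasAntidiagonal.mem_antidiagonal] at hp
    by_cases h2 : p2 = γ
    · exfalso
      apply h
      subst h2
      exact hp ▸ le_add_self
    · rw [if_neg h2]

lemma hD_C (α : σ →₀ ℕ) (c : K) :
    hD α (C c : MvPolynomial σ K) = if α = 0 then C c else 0 := by
  unfold hD
  rw [tay_C, MvPolynomial.coeff_C]
  by_cases h : α = 0
  · rw [if_pos h, if_pos h.symm]
  · rw [if_neg h, if_neg (fun hh => h hh.symm)]

lemma hD_one (α : σ →₀ ℕ) :
    hD α (1 : MvPolynomial σ K) = if α = 0 then 1 else 0 := by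
  have := hD_C (K := K) (σ := σ) α 1
  rw [map_one] at this
  exact this

lemma hD_X (α : σ →₀ ℕ) (i : σ) :
    hD α (X i : MvPolynomial σ K)
      = if α = 0 then X i else if α = Finsupp.single i 1 then 1 else 0 := by
  unfold hD
  rw [tay_X, coeff_add, MvPolynomial.coeff_C, MvPolynomial.coeff_X']
  by_cases h : α = 0
  · subst h
    rw [if_pos rfl, if_pos rfl, if_neg, add_zero]
    exact fun hh => one_ne_zero (Finsupp.single_eq_zero.1 hh)
  · rw [if_neg (fun hh => h hh.symm), if_neg h, zero_add]
    by_cases h2 : α = Finsupp.single i 1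
    · rw [if_pos h2.symm, if_pos h2]
    · rw [if_neg (fun hh => h2 hh.symm), if_neg h2]

lemma hD_mul_X (α : σ →₀ ℕ) (g : MvPolynomial σ K) (i : σ) :
    hD α (g * X i) = hD α g * X i +
      (if Finsupp.single i 1 ≤ α then hD (α - Finsupp.single i 1) g else 0) := by
  rw [hD_leibniz]
  have hpt : ∀ p ∈ Finset.HasAntidiagonal.antidiagonal α,
      hD p.1 g * hD p.2 (X i)
        = (if p.2 = 0 then hD p.1 g * X i else 0)
          + (if p.2 = Finsupp.single i 1 then hD p.1 g else 0) := by
    intro p _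
    rw [hD_X]
    by_cases h0 : p.2 = 0
    · rw [if_pos h0, if_pos h0, if_neg, add_zero]
      rw [h0]
      exact fun hh => one_ne_zero (Finsupp.single_eq_zero.1 hh.symm)
    · rw [if_neg h0, if_neg h0]
      by_cases h1 : p.2 = Finsupp.single i 1
      · rw [if_pos h1, if_pos h1, mul_one, zero_add]
      · rw [if_neg h1, if_neg h1, mul_zero, zero_add]
  rw [Finset.sum_congr rfl hpt, Finset.sum_add_distrib,
    sum_antidiagonal_eq α 0 (fun β => hD β g * X i),
    sum_antidiagonal_eq α (Finsupp.single i 1) (fun β => hD β g)]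
  rw [if_pos (zero_le (a := α)), tsub_zero]

end StmtAux
end
section
open MvPolynomial
namespace StmtAux
variable {K : Type*} [Field K] {σ : Type*} [DecidableEq σ]

lemma coord_le_degSum (b : σ →₀ ℕ) (j : σ) : b j ≤ b.sum fun _ k => k := by
  by_cases h : b j = 0
  · omega
  · exact Finset.single_le_sum (fun _ _ => Nat.zero_le _) (Finsupp.mem_support_iff.2 h)

lemma hD_monomial_of_zero (α : σ →₀ ℕ) (c : K) :
    hD α (monomial (0 : σ →₀ ℕ) c) = monomial ((0 : σ →₀ ℕ) - α) ((binomN 0 α : K) * c) := by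
  have h0 : ((0 : σ →₀ ℕ) - α) = 0 := by
    ext j
    simp
  rw [h0]
  have hC : (monomial (0 : σ →₀ ℕ)) c = (C c : MvPolynomial σ K) := by
    rw [MvPolynomial.monomial_zero']
  rw [hC, hD_C]
  by_cases h : α = 0
  · rw [if_pos h, h, binomN_zero_right]
    rw [Nat.cast_one, one_mul, ← hC]
  · rw [if_neg h, binomN_zero_left h]
    rw [Nat.cast_zero, zero_mul, MvPolynomial.monomial_zero]

lemma hD_monomial (b α : σ →₀ ℕ) (c : K) :
    hD α (monomial b c) = monomial (b - α) ((binomN b α : K) * c) := by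
  suffices h : ∀ d (b α : σ →₀ ℕ) (c : K), (b.sum fun _ k => k) ≤ d →
      hD α (monomial b c) = monomial (b - α) ((binomN b α : K) * c) from
    h _ b α c le_rfl
  intro d
  induction d with
  | zero =>
    intro b α c hb
    have hb0 : b = 0 := by
      ext j
      have := coord_le_degSum b j
      simp only [Finsupp.coe_zero, Pi.zero_apply]
      omega
    subst hb0
    exact hD_monomial_of_zero α c
  | succ d ih =>
    intro b α c hb
    by_cases hb0 : b = 0
    · subst hb0
      exact hD_monomial_of_zero α c
    · obtain ⟨i, hi⟩ : ∃ i, i ∈ b.support := by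
        by_contra h
        push_neg at h
        exact hb0 (Finsupp.support_eq_empty.1 (Finset.eq_empty_of_forall_notMem h) ▸ rfl)
      have hbi : b i ≠ 0 := Finsupp.mem_support_iff.1 hi
      have hbe : (b - Finsupp.single i 1) + Finsupp.single i 1 = b := by
        ext j
        simp only [Finsupp.add_apply, Finsupp.tsub_apply, Finsupp.single_apply]
        by_cases hji : i = j
        · subst hji
          simp only [eq_self_iff_true, if_true]
          omega
        · simp only [if_neg hji]
          omega
      have hdeg : ((b - Finsupp.single i 1).sum fun _ k => k) ≤ d := by
        have hsum : (b.sum fun _ k => k)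
            = ((b - Finsupp.single i 1).sum fun _ k => k) + 1 := by
          conv_lhs => rw [← hbe]
          rw [Finsupp.sum_add_index' (fun _ => rfl) (fun _ _ _ => rfl),
            Finsupp.sum_single_index rfl]
        omega
      have hmon : (monomial b c : MvPolynomial σ K)
          = monomial (b - Finsupp.single i 1) c * X i := by
        conv_lhs => rw [← hbe]
        rw [← pow_one (X i : MvPolynomial σ K), MvPolynomial.X_pow_eq_monomial,
          MvPolynomial.monomial_mul, mul_one]
      rw [hmon, hD_mul_X, ih (b - Finsupp.single i 1) α c hdeg]
      by_cases hαi : α i = 0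
      · -- case A : the variable i does not occur in α
        have hnle : ¬ (Finsupp.single i 1 ≤ α) := by
          rw [Finsupp.single_le_iff]
          omega
        rw [if_neg hnle, add_zero]
        rw [← pow_one (X i : MvPolynomial σ K), MvPolynomial.X_pow_eq_monomial,
          MvPolynomial.monomial_mul, mul_one]
        have hexp : (b - Finsupp.single i 1) - α + Finsupp.single i 1 = b - α := by
          ext j
          simp only [Finsupp.add_apply, Finsupp.tsub_apply, Finsupp.single_apply]
          by_cases hji : i = j
          · subst hji
            simp only [eq_self_iff_true, if_true]
            omega
          · simp only [if_neg hji]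
            omega
        have hcoe : binomN (b - Finsupp.single i 1) α = binomN b α := by
          unfold binomN
          refine Finset.prod_congr rfl ?_
          intro j hj
          have hji : ¬ (i = j) := by
            intro hh
            subst hh
            exact (Finsupp.mem_support_iff.1 hj) hαi
          rw [Finsupp.tsub_apply, Finsupp.single_apply, if_neg hji, Nat.sub_zero]
        rw [hexp, hcoe]
      · -- case B : α i ≥ 1
        have hle : Finsupp.single i 1 ≤ α := by
          rw [Finsupp.single_le_iff]
          omega
        rw [if_pos hle, ih (b - Finsupp.single i 1) (α - Finsupp.single i 1) c hdeg]
        have hco : (binomN b α : K) = (binomN (b - Finsupp.single i 1) α : K)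
            + (binomN (b - Finsupp.single i 1) (α - Finsupp.single i 1) : K) := by
          conv_lhs => rw [← hbe]
          rw [binomN_pascal hαi, Nat.cast_add]
        rw [hco, add_mul, map_add]
        have hT1 : (monomial ((b - Finsupp.single i 1) - α))
              ((binomN (b - Finsupp.single i 1) α : K) * c) * X i
            = (monomial (b - α)) ((binomN (b - Finsupp.single i 1) α : K) * c) := by
          by_cases hab : α i + 1 ≤ b i
          · rw [← pow_one (X i : MvPolynomial σ K), MvPolynomial.X_pow_eq_monomial,
              MvPolynomial.monomial_mul, mul_one]
            have hexp : (b - Finsupp.single i 1) - α + Finsupp.single i 1 = b - α := by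
              ext j
              simp only [Finsupp.add_apply, Finsupp.tsub_apply, Finsupp.single_apply]
              by_cases hji : i = j
              · subst hji
                simp only [eq_self_iff_true, if_true]
                omega
              · simp only [if_neg hji]
                omega
            rw [hexp]
          · have hz : binomN (b - Finsupp.single i 1) α = 0 := by
              refine Finset.prod_eq_zero (Finsupp.mem_support_iff.2 hαi) ?_
              refine Nat.choose_eq_zero_of_lt ?_
              rw [Finsupp.tsub_apply, Finsupp.single_apply, if_pos rfl]
              omega
            rw [hz, Nat.cast_zero, zero_mul, MvPolynomial.monomial_zero,
              MvPolynomial.monomial_zero, zero_mul]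
        have hT2 : (monomial ((b - Finsupp.single i 1) - (α - Finsupp.single i 1)))
              ((binomN (b - Finsupp.single i 1) (α - Finsupp.single i 1) : K) * c)
            = (monomial (b - α))
              ((binomN (b - Finsupp.single i 1) (α - Finsupp.single i 1) : K) * c) := by
          have hexp : (b - Finsupp.single i 1) - (α - Finsupp.single i 1) = b - α := by
            ext j
            simp only [Finsupp.tsub_apply, Finsupp.single_apply]
            by_cases hji : i = j
            · subst hji
              simp only [eq_self_iff_true, if_true]
              omega
            · simp only [if_neg hji]
              omega
          rw [hexp]
        rw [hT1, hT2]

end StmtAux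
end
section
open MvPolynomial
namespace StmtAux
variable {K : Type*} [Field K] {σ : Type*} [DecidableEq σ]

noncomputable def hDhom (α : σ →₀ ℕ) : MvPolynomial σ K →+ MvPolynomial σ K :=
  AddMonoidHom.mk' (hD α) (hD_add α)

lemma hD_eq_sum (α : σ →₀ ℕ) (f : MvPolynomial σ K) :
    hD α f = ∑ b ∈ f.support, monomial (b - α) ((binomN b α : K) * coeff b f) := by
  have h1 : hD α f = hDhom α f := rfl
  conv_lhs => rw [h1, MvPolynomial.as_sum f]
  rw [map_sum]
  refine Finset.sum_congr rfl ?_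
  intro b _
  exact hD_monomial b α (coeff b f)

lemma support_hD (α : σ →₀ ℕ) (f : MvPolynomial σ K) {e : σ →₀ ℕ}
    (he : e ∈ (hD α f).support) : ∃ b ∈ f.support, α ≤ b ∧ e = b - α := by
  rw [hD_eq_sum] at he
  have hmem := MvPolynomial.support_sum he
  rw [Finset.mem_biUnion] at hmem
  obtain ⟨b, hb, hbe⟩ := hmem
  classical
  rw [MvPolynomial.support_monomial] at hbe
  by_cases hz : (binomN b α : K) * coeff b f = 0
  · rw [if_pos hz] at hbe
    exact absurd hbe (Finset.notMem_empty e)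
  · rw [if_neg hz] at hbe
    have hbin : (binomN b α : K) ≠ 0 := fun h => hz (by rw [h, zero_mul])
    have hbinN : binomN b α ≠ 0 := fun h => hbin (by rw [h, Nat.cast_zero])
    exact ⟨b, hb, binomN_ne_zero_le hbinN, Finset.mem_singleton.1 hbe⟩

lemma coeff_hD (α a : σ →₀ ℕ) (f : MvPolynomial σ K) (hle : α ≤ a) :
    coeff (a - α) (hD α f) = (binomN a α : K) * coeff a f := by
  classical
  rw [hD_eq_sum]
  rw [MvPolynomial.coeff_sum]
  have hterm : ∀ b ∈ f.support, b ≠ a →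
      coeff (a - α) (monomial (b - α) ((binomN b α : K) * coeff b f)) = 0 := by
    intro b _ hba
    rw [MvPolynomial.coeff_monomial]
    by_cases hba2 : b - α = a - α
    · rw [if_pos hba2]
      by_cases hαb : α ≤ b
      · exfalso
        apply hba
        have h1 : b - α + α = b := tsub_add_cancel_of_le hαb
        have h2 : a - α + α = a := tsub_add_cancel_of_le hle
        rw [← h1, ← h2, hba2]
      · have hbinN : binomN b α = 0 := by
          by_contra h
          exact hαb (binomN_ne_zero_le h)
        rw [hbinN, Nat.cast_zero, zero_mul]
    · rw [if_neg hba2]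
  by_cases hmem : a ∈ f.support
  · rw [Finset.sum_eq_single_of_mem a hmem hterm, MvPolynomial.coeff_monomial, if_pos rfl]
  · rw [Finset.sum_eq_zero]
    · rw [MvPolynomial.notMem_support_iff.1 hmem, mul_zero]
    · intro b hb
      exact hterm b hb (fun h => hmem (h ▸ hb))

/-- key: the Hasse derivative along the "A-part" of the lead exponent has lead `a - α`. -/
lemma leadExp_hD (mo : MonomialOrder σ) {f : MvPolynomial σ K} (hf : f ≠ 0)
    {α : σ →₀ ℕ} (hle : α ≤ leadExp mo f) (hbin : binomN (leadExp mo f) α = 1) :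
    hD α f ≠ 0 ∧ leadExp mo (hD α f) = leadExp mo f - α := by
  set a := leadExp mo f with ha
  have hco : coeff (a - α) (hD α f) = coeff a f := by
    rw [coeff_hD α a f hle, hbin, Nat.cast_one, one_mul]
  have hne : hD α f ≠ 0 := by
    intro h
    rw [h] at hco
    exact coeff_leadExp_ne_zero mo hf (by rw [← ha, ← hco]; rfl)
  have hmem : a - α ∈ (hD α f).support := by
    rw [MvPolynomial.mem_support_iff, hco]
    exact coeff_leadExp_ne_zero mo hf
  refine ⟨hne, leadExp_eq mo hmem ?_⟩
  intro e he
  obtain ⟨b, hb, hαb, hbe⟩ := support_hD α f he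
  have h1 : mo.toSyn e + mo.toSyn α = mo.toSyn b := by
    rw [← map_add, hbe, tsub_add_cancel_of_le hαb]
  have h2 : mo.toSyn (a - α) + mo.toSyn α = mo.toSyn a := by
    rw [← map_add, tsub_add_cancel_of_le hle]
  have hba : mo.toSyn b ≤ mo.toSyn a := le_toSyn_leadExp mo hb
  have : mo.toSyn e + mo.toSyn α ≤ mo.toSyn (a - α) + mo.toSyn α := by
    rw [h1, h2]
    exact hba
  exact le_of_add_le_add_right this

/-- the sum of values of a finsupp -/
lemma degSum_add (α β : σ →₀ ℕ) :
    ((α + β).sum fun _ k => k) = (α.sum fun _ k => k) + (β.sum fun _ k => k) :=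
  Finsupp.sum_add_index' (fun _ => rfl) (fun _ _ _ => rfl)

lemma degSum_pos {α : σ →₀ ℕ} (h : α ≠ 0) : 1 ≤ α.sum fun _ k => k := by
  obtain ⟨i, hi⟩ : ∃ i, i ∈ α.support := by
    by_contra hc
    push_neg at hc
    exact h (Finsupp.support_eq_empty.1 (Finset.eq_empty_of_forall_notMem hc) ▸ rfl)
  have h1 := Finsupp.mem_support_iff.1 hi
  have h2 := coord_le_degSum α i
  omega

lemma hD_mem_pow (U : Ideal (MvPolynomial σ K)) :
    ∀ (ℓ : ℕ) (α : σ →₀ ℕ) (f : MvPolynomial σ K), f ∈ U ^ ℓ →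
      hD α f ∈ U ^ (ℓ - α.sum fun _ k => k) := by
  intro ℓ
  induction ℓ with
  | zero =>
    intro α f _
    rw [Nat.zero_sub, pow_zero, Ideal.one_eq_top]
    exact Submodule.mem_top
  | succ ℓ ih =>
    intro α f hf
    rw [pow_succ] at hf
    refine Submodule.mul_induction_on hf ?_ ?_
    · intro m hm n hn
      rw [hD_leibniz]
      refine Ideal.sum_mem _ ?_
      rintro ⟨β, γ⟩ hp
      rw [Finset.HasAntidiagonal.mem_antidiagonal] at hp
      by_cases hγ : γ = 0
      · have hβ : β = α := by
          rw [hγ, add_zero] at hp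
          exact hp
        subst hβ
        rw [hγ, hD_zero]
        have h1 : hD β m * n ∈ U ^ (ℓ - β.sum fun _ k => k) * U :=
          Ideal.mul_mem_mul (ih β m hm) hn
        rw [← pow_succ] at h1
        refine Ideal.pow_le_pow_right ?_ h1
        omega
      · have h1 : hD β m * hD γ n ∈ U ^ (ℓ - β.sum fun _ k => k) :=
          Ideal.mul_mem_right _ _ (ih β m hm)
        refine Ideal.pow_le_pow_right ?_ h1
        have h2 := degSum_pos hγ
        have h3 : ((α.sum fun _ k => k))
            = (β.sum fun _ k => k) + (γ.sum fun _ k => k) := by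
          rw [← hp, degSum_add]
        omega
    · intro x y hx hy
      have h : hD α (x + y) = hD α x + hD α y := hD_add α x y
      rw [h]
      exact Ideal.add_mem _ hx hy

end StmtAux
end
section
open MvPolynomial
namespace StmtAux
variable {K : Type*} [Field K] {σ : Type*} [DecidableEq σ]

lemma monomial_factor {a : σ →₀ ℕ} {i : σ} (hi : a i ≠ 0) :
    (monomial a (1 : K)) = monomial (a - Finsupp.single i 1) (1 : K) * X i := by
  have hbe : (a - Finsupp.single i 1) + Finsupp.single i 1 = a := by
    ext j
    simp only [Finsupp.add_apply, Finsupp.tsub_apply, Finsupp.single_apply]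
    by_cases hji : i = j
    · subst hji
      simp only [eq_self_iff_true, if_true]
      omega
    · simp only [if_neg hji]
      omega
  conv_lhs => rw [← hbe]
  rw [← pow_one (X i : MvPolynomial σ K), MvPolynomial.X_pow_eq_monomial,
    MvPolynomial.monomial_mul, mul_one]

lemma exists_X_mem_of_monomial_mem {P : Ideal (MvPolynomial σ K)} (hP : P.IsPrime)
    {a : σ →₀ ℕ} (ha : monomial a (1 : K) ∈ P) : ∃ i, a i ≠ 0 ∧ X i ∈ P := by
  suffices h : ∀ d (a : σ →₀ ℕ), (a.sum fun _ k => k) ≤ d → monomial a (1 : K) ∈ P →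
      ∃ i, a i ≠ 0 ∧ X i ∈ P from h _ a le_rfl ha
  intro d
  induction d with
  | zero =>
    intro a hd hmem
    have ha0 : a = 0 := by
      ext j
      have := coord_le_degSum a j
      simp only [Finsupp.coe_zero, Pi.zero_apply]
      omega
    subst ha0
    exfalso
    have h1 : (monomial (0 : σ →₀ ℕ) (1 : K)) = 1 := by
      rw [MvPolynomial.monomial_zero', map_one]
    rw [h1] at hmem
    exact hP.ne_top (Ideal.eq_top_iff_one P |>.2 hmem)
  | succ d ih =>
    intro a hd hmem
    by_cases ha0 : a = 0
    · subst ha0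
      exfalso
      have h1 : (monomial (0 : σ →₀ ℕ) (1 : K)) = 1 := by
        rw [MvPolynomial.monomial_zero', map_one]
      rw [h1] at hmem
      exact hP.ne_top (Ideal.eq_top_iff_one P |>.2 hmem)
    · obtain ⟨i, hi⟩ : ∃ i, i ∈ a.support := by
        by_contra hc
        push_neg at hc
        exact ha0 (Finsupp.support_eq_empty.1 (Finset.eq_empty_of_forall_notMem hc) ▸ rfl)
      have hai : a i ≠ 0 := Finsupp.mem_support_iff.1 hi
      rw [monomial_factor hai] at hmem
      rcases hP.mem_or_mem hmem with h | h
      · have hdeg : ((a - Finsupp.single i 1).sum fun _ k => k) ≤ d := by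
          have hbe : (a - Finsupp.single i 1) + Finsupp.single i 1 = a := by
            ext j
            simp only [Finsupp.add_apply, Finsupp.tsub_apply, Finsupp.single_apply]
            by_cases hji : i = j
            · subst hji
              simp only [eq_self_iff_true, if_true]
              omega
            · simp only [if_neg hji]
              omega
          have hsum : (a.sum fun _ k => k)
              = ((a - Finsupp.single i 1).sum fun _ k => k) + 1 := by
            conv_lhs => rw [← hbe]
            rw [degSum_add, Finsupp.sum_single_index rfl]
          omega
        obtain ⟨j, hj1, hj2⟩ := ih (a - Finsupp.single i 1) hdeg h
        refine ⟨j, ?_, hj2⟩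
        have : ((a - Finsupp.single i 1) : σ →₀ ℕ) j ≤ a j := by
          rw [Finsupp.tsub_apply]
          omega
        omega
      · exact ⟨i, hai, h⟩

lemma monomial_mem_pow {P : Ideal (MvPolynomial σ K)} :
    ∀ (ℓ : ℕ) (α : σ →₀ ℕ), (∀ i, α i ≠ 0 → X i ∈ P) → ℓ ≤ (α.sum fun _ k => k) →
      monomial α (1 : K) ∈ P ^ ℓ := by
  intro ℓ
  induction ℓ with
  | zero =>
    intro α _ _
    rw [pow_zero, Ideal.one_eq_top]
    exact Submodule.mem_top
  | succ ℓ ih =>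
    intro α hα hdeg
    have hα0 : α ≠ 0 := by
      intro h
      subst h
      rw [Finsupp.sum_zero_index] at hdeg
      omega
    obtain ⟨i, hi⟩ : ∃ i, i ∈ α.support := by
      by_contra hc
      push_neg at hc
      exact hα0 (Finsupp.support_eq_empty.1 (Finset.eq_empty_of_forall_notMem hc) ▸ rfl)
    have hαi : α i ≠ 0 := Finsupp.mem_support_iff.1 hi
    rw [monomial_factor hαi, pow_succ]
    refine Ideal.mul_mem_mul ?_ (hα i hαi)
    refine ih (α - Finsupp.single i 1) ?_ ?_
    · intro j hj
      refine hα j ?_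
      rw [Finsupp.tsub_apply] at hj
      omega
    · have hbe : (α - Finsupp.single i 1) + Finsupp.single i 1 = α := by
        ext j
        simp only [Finsupp.add_apply, Finsupp.tsub_apply, Finsupp.single_apply]
        by_cases hji : i = j
        · subst hji
          simp only [eq_self_iff_true, if_true]
          omega
        · simp only [if_neg hji]
          omega
      have hsum : (α.sum fun _ k => k)
          = ((α - Finsupp.single i 1).sum fun _ k => k) + 1 := by
        conv_lhs => rw [← hbe]
        rw [degSum_add, Finsupp.sum_single_index rfl]
      omega

end StmtAux
end
section
open MvPolynomial

namespace StmtAux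
variable {σ : Type*} [DecidableEq σ]

lemma lead_mem_pow_of_prime (mo : MonomialOrder σ) (U : Ideal (MvPolynomial σ K))
    {P : Ideal (MvPolynomial σ K)} (hP : P.IsPrime) (hWP : initialIdeal mo U ≤ P)
    (ℓ : ℕ) {f : MvPolynomial σ K} (hf : f ∈ U ^ ℓ) (hne : f ≠ 0) :
    monomial (leadExp mo f) (1 : K) ∈ P ^ ℓ := by
  classical
  set a := leadExp mo f with ha
  set α := Finsupp.filter (fun i => X i ∈ P) a with hα
  have hαap : ∀ i, α i = if X i ∈ P then a i else 0 := by
    intro i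
    rw [hα, Finsupp.filter_apply]
  have hle : α ≤ a := by
    intro j
    rw [hαap]
    split <;> omega
  have hbin : binomN a α = 1 := by
    unfold binomN
    refine Finset.prod_eq_one ?_
    intro j hj
    have hjne : α j ≠ 0 := Finsupp.mem_support_iff.1 hj
    have hXj : X j ∈ P := by
      by_contra hc
      rw [hαap, if_neg hc] at hjne
      exact hjne rfl
    have : α j = a j := by rw [hαap, if_pos hXj]
    rw [this, Nat.choose_self]
  by_cases hcase : ℓ ≤ α.sum fun _ k => k
  · have hsplit : monomial a (1 : K) = monomial (a - α) (1 : K) * monomial α 1 := by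
      rw [MvPolynomial.monomial_mul, one_mul, tsub_add_cancel_of_le hle]
    rw [hsplit]
    refine Ideal.mul_mem_left _ _ ?_
    refine monomial_mem_pow ℓ α ?_ hcase
    intro i hi
    by_contra hc
    rw [hαap, if_neg hc] at hi
    exact hi rfl
  · exfalso
    have hg := hD_mem_pow U ℓ α f hf
    have hgU : hD α f ∈ U := Ideal.pow_le_self (by omega) hg
    obtain ⟨hgne, hglead⟩ := leadExp_hD mo hne hle hbin
    have hmonP : monomial (leadExp mo (hD α f)) (1 : K) ∈ P :=
      hWP (Ideal.subset_span ⟨hD α f, hgU, hgne, rfl⟩)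
    rw [hglead] at hmonP
    obtain ⟨i, hi1, hi2⟩ := exists_X_mem_of_monomial_mem hP hmonP
    have hz : ((a - α : σ →₀ ℕ)) i = 0 := by
      rw [Finsupp.tsub_apply, hαap, if_pos hi2]
      omega
    exact hi1 hz

lemma init_mul_le (mo : MonomialOrder σ) (I J : Ideal (MvPolynomial σ K)) :
    initialIdeal mo I * initialIdeal mo J ≤ initialIdeal mo (I * J) := by
  unfold initialIdeal
  rw [Ideal.span_mul_span']
  refine Ideal.span_le.2 ?_
  rintro z hz
  rw [Set.mem_mul] at hz
  obtain ⟨x, hx, y, hy, rfl⟩ := hz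
  obtain ⟨f, hfI, hfne, rfl⟩ := hx
  obtain ⟨g, hgJ, hgne, rfl⟩ := hy
  refine Ideal.subset_span ⟨f * g, Ideal.mul_mem_mul hfI hgJ, mul_ne_zero hfne hgne, ?_⟩
  rw [MvPolynomial.monomial_mul, one_mul, leadExp_mul mo hfne hgne]

lemma pow_init_le (mo : MonomialOrder σ) (U : Ideal (MvPolynomial σ K)) :
    ∀ ℓ : ℕ, 1 ≤ ℓ → initialIdeal mo U ^ ℓ ≤ initialIdeal mo (U ^ ℓ) := by
  intro ℓ hℓ
  induction ℓ with
  | zero => omega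
  | succ n ih =>
    by_cases hn : n = 0
    · subst hn
      rw [pow_one, pow_one]
    · calc initialIdeal mo U ^ (n + 1)
          = initialIdeal mo U ^ n * initialIdeal mo U := pow_succ _ _
        _ ≤ initialIdeal mo (U ^ n) * initialIdeal mo U :=
            Ideal.mul_mono (ih (by omega)) le_rfl
        _ ≤ initialIdeal mo (U ^ n * U) := init_mul_le mo _ _
        _ = initialIdeal mo (U ^ (n + 1)) := by rw [← pow_succ]

end StmtAux
end


/-- If `in(U)` is a squarefree monomial ideal whose symbolic and
ordinary powers agree, then `in(U^ℓ) = in(U)^ℓ` for all `ℓ ≥ 1`. -/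
theorem stmt_2 (N : ℕ) (mo : MonomialOrder (Fin N)) (U : Ideal (MvPolynomial (Fin N) K))
    (hsq : IsSquarefreeMonomialIdeal (initialIdeal mo U))
    (heq : ∀ ℓ, 1 ≤ ℓ → symbolicPower (initialIdeal mo U) ℓ = initialIdeal mo U ^ ℓ) :
    ∀ ℓ, 1 ≤ ℓ → initialIdeal mo (U ^ ℓ) = initialIdeal mo U ^ ℓ := by
  intro ℓ hℓ
  refine le_antisymm ?_ (StmtAux.pow_init_le mo U ℓ hℓ)
  rw [← heq ℓ hℓ]
  refine Ideal.span_le.2 ?_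
  rintro g ⟨f, hfU, hfne, rfl⟩
  rw [SetLike.mem_coe]
  unfold symbolicPower
  rw [Submodule.mem_iInf]
  rintro ⟨P, hPmin⟩
  have hP : P.IsPrime := hPmin.1.1
  have hWP : initialIdeal mo U ≤ P := hPmin.1.2
  exact Ideal.mem_comap.2
    (Ideal.mem_map_of_mem _ (StmtAux.lead_mem_pow_of_prime mo U hP hWP ℓ hfU hfne))
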